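/- arXiv:1903.05910 — 2 statements merged into one kernel-verified Lean document; each statement's English description precedes it below -/
import Mathlib

section
/- If a homogeneous noncommutative polynomial p of degree δd with grouped coefficient function P admits a t-term (δ,d)-NC Waring decomposition, i.e. there exists A : Fin t → (Fin δ → Fin g) → ℂ with p = ∑_{s : Fin t} (∑_{β} A(s,β) • x^β)^d in the free algebra, then p satisfies the δ-compatibility condition: P(μ) = P(μ ∘ π) for every μ : Fin d → (Fin δ → Fin g) and every permutation π of Fin d. -/
/-!
Expanding the `d`-th power of `∑_β A(s,β) x^β` in the free algebra gives
`∑_μ (∏_i A(s, μ i)) x^μ`. The grouped words `x^μ` are distinct members of the free-monoid basis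
of the free algebra, so comparing coefficients yields `P μ = ∑_s ∏_i A(s, μ i)`, and the right-hand
side is invariant under permuting the blocks of `μ` because `ℂ` is commutative.
-/

open scoped BigOperators

/-- The ordered noncommutative word `x_{β 0} x_{β 1} ⋯ x_{β (δ-1)}` in the free algebra. -/
noncomputable def ncWord {g δ : ℕ} (β : Fin δ → Fin g) : FreeAlgebra ℂ (Fin g) :=
  (List.ofFn fun i => FreeAlgebra.ι ℂ (β i)).prod

/-- The ordered product `x^{μ 0} x^{μ 1} ⋯ x^{μ (d-1)}` of the `δ`-blocks of `μ`. -/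
noncomputable def ncGWord {g d δ : ℕ} (μ : Fin d → Fin δ → Fin g) : FreeAlgebra ℂ (Fin g) :=
  (List.ofFn fun i => ncWord (μ i)).prod

theorem List.flatten_ofFn_ofFn_injective {α : Type*} {m n : ℕ} :
    Function.Injective fun f : Fin m → Fin n → α => (List.ofFn fun i => List.ofFn (f i)).flatten := by
  induction m with
  | zero => exact fun f f' _ => funext finZeroElim
  | succ m ih =>
    intro f f' h
    simp only [List.ofFn_succ, List.flatten_cons] at h
    obtain ⟨h0, hs⟩ := List.append_inj h (by simp)
    rw [← Fin.cons_self_tail f, ← Fin.cons_self_tail f', List.ofFn_injective h0]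
    exact congrArg _ (ih hs)

theorem sum_smul_pow_eq_sum_prod_smul_prod_ofFn {R A ι : Type*} [CommSemiring R] [Semiring A]
    [Algebra R A] [Fintype ι] (c : ι → R) (w : ι → A) (n : ℕ) :
    (∑ i, c i • w i) ^ n = ∑ ν : Fin n → ι, (∏ k, c (ν k)) • (List.ofFn (w ∘ ν)).prod := by
  have := (MultilinearMap.mkPiAlgebraFin R n A).map_sum fun _ i => c i • w i
  simp only [MultilinearMap.mkPiAlgebraFin_apply, List.ofFn_const, List.prod_replicate] at this
  rw [this]
  refine Finset.sum_congr rfl fun ν _ => ?_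
  rw [← MultilinearMap.mkPiAlgebraFin_apply (R := R), MultilinearMap.map_smul_univ]
  rfl

namespace FreeAlgebra

variable {R X : Type*} [CommSemiring R]

theorem equivMonoidAlgebraFreeMonoid_lift_ι (w : FreeMonoid X) :
    equivMonoidAlgebraFreeMonoid (FreeMonoid.lift (ι R) w) = MonoidAlgebra.of R _ w := by
  induction w using FreeMonoid.inductionOn' with
  | one => simp [MonoidAlgebra.one_def]
  | of_mul x w ih =>
    rw [map_mul, map_mul, ih, FreeMonoid.lift_eval_of, map_mul]
    simp [equivMonoidAlgebraFreeMonoid]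

theorem basisFreeMonoid_apply (w : FreeMonoid X) :
    basisFreeMonoid R X w = FreeMonoid.lift (ι R) w := by
  simp [basisFreeMonoid, AlgEquiv.symm_apply_eq, equivMonoidAlgebraFreeMonoid_lift_ι]

end FreeAlgebra

section Waring

variable {g d δ : ℕ}

def blockWord {X : Type*} (μ : Fin d → Fin δ → X) : FreeMonoid X :=
  FreeMonoid.ofList (List.ofFn fun i => List.ofFn (μ i)).flatten

theorem blockWord_injective {X : Type*} :
    Function.Injective (blockWord : (Fin d → Fin δ → X) → FreeMonoid X) :=
  FreeMonoid.ofList.injective.comp List.flatten_ofFn_ofFn_injective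

theorem ncGWord_eq_basisFreeMonoid (μ : Fin d → Fin δ → Fin g) :
    ncGWord μ = FreeAlgebra.basisFreeMonoid ℂ (Fin g) (blockWord μ) := by
  simp only [FreeAlgebra.basisFreeMonoid_apply, blockWord, FreeMonoid.lift_ofList, List.map_flatten,
    List.prod_flatten, List.map_ofFn, Function.comp_def, ncGWord, ncWord]

theorem sum_smul_ncWord_pow (a : (Fin δ → Fin g) → ℂ) :
    (∑ β, a β • ncWord β) ^ d = ∑ μ : Fin d → Fin δ → Fin g, (∏ i, a (μ i)) • ncGWord μ :=
  sum_smul_pow_eq_sum_prod_smul_prod_ofFn a ncWord d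

theorem coeff_eq_sum_prod_of_eq_sum_pow {σ : Type*} [Fintype σ] (P : (Fin d → Fin δ → Fin g) → ℂ)
    (A : σ → (Fin δ → Fin g) → ℂ)
    (hdecomp : ∑ μ, P μ • ncGWord μ = ∑ s, (∑ β, A s β • ncWord β) ^ d)
    (μ : Fin d → Fin δ → Fin g) :
    P μ = ∑ s, ∏ i, A s (μ i) := by
  have hli := (FreeAlgebra.basisFreeMonoid ℂ (Fin g)).linearIndependent.comp _
    (blockWord_injective (d := d) (δ := δ))
  refine Fintype.linearIndependent_iffₛ.mp hli P (fun μ => ∑ s, ∏ i, A s (μ i)) ?_ μ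
  simp only [Function.comp_apply, ← ncGWord_eq_basisFreeMonoid, Finset.sum_smul, hdecomp,
    sum_smul_ncWord_pow]
  exact Finset.sum_comm

end Waring

theorem stmt8_general (g d δ t : ℕ)
    (P : (Fin d → (Fin δ → Fin g)) → ℂ) (A : Fin t → (Fin δ → Fin g) → ℂ)
    (hdecomp : (∑ μ : Fin d → (Fin δ → Fin g), P μ • ncGWord μ)
      = ∑ s : Fin t, (∑ β : Fin δ → Fin g, A s β • ncWord β) ^ d) :
    ∀ (μ : Fin d → (Fin δ → Fin g)) (π : Equiv.Perm (Fin d)), P (μ ∘ π) = P μ := by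
  intro μ π
  rw [coeff_eq_sum_prod_of_eq_sum_pow P A hdecomp, coeff_eq_sum_prod_of_eq_sum_pow P A hdecomp]
  exact Finset.sum_congr rfl fun s _ => Equiv.prod_comp π fun i => A s (μ i)

theorem stmt8 (g d δ t : ℕ) (hg : 1 ≤ g) (hd : 1 ≤ d) (hδ : 1 ≤ δ) (ht : 1 ≤ t)
    (P : (Fin d → (Fin δ → Fin g)) → ℂ) (A : Fin t → (Fin δ → Fin g) → ℂ)
    (hdecomp : (∑ μ : Fin d → (Fin δ → Fin g), P μ • ncGWord μ)
      = ∑ s : Fin t, (∑ β : Fin δ → Fin g, A s β • ncWord β) ^ d) :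
    ∀ (μ : Fin d → (Fin δ → Fin g)) (π : Equiv.Perm (Fin d)), P (μ ∘ π) = P μ :=
  stmt8_general g d δ t P A hdecomp
end

section
/- Let p be a homogeneous noncommutative polynomial of degree δd with grouped coefficient function P, and let φ(p) = ∑_{μ : Fin d → (Fin δ → Fin g)} P(μ) • z_{μ(0)} z_{μ(1)} ⋯ z_{μ(d-1)} be the corresponding homogeneous degree-d element of FreeAlgebra ℂ (Fin δ → Fin g) in the generators z_β. Then p has a t-term (δ,d)-NC Waring decomposition if and only if φ(p) has a t-term NC Waring decomposition into d-th powers of linear forms, i.e. φ(p) = ∑_{s : Fin t} (∑_{β} A(s,β) • z_β)^d for some A : Fin t → (Fin δ → Fin g) → ℂ; moreover the same coefficient family A works on both sides. -/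
/-
The substitution `z_β ↦ x^β` is an algebra map `φ` with `φ (z^μ) = x^μ` and `φ (z_β) = x^β`,
so it carries each side of the second equation to the corresponding side of the first.
For `δ ≥ 1` it is injective: on monomials it spells out a word in the letters `z_β` as a word
in the `x_j`, and since every `β` has the same positive length `δ`, the original word is
recovered by cutting the result into blocks of length `δ`. An injective map on monomials
induces an injective map on the monoid algebras, i.e. on the free algebras.
-/

open scoped BigOperators

/-- The word `z_{μ 0} z_{μ 1} ⋯ z_{μ (d-1)}` in the free algebra on the `g^δ` letters `z_β`. -/
noncomputable def zWord {g d δ : ℕ} (μ : Fin d → Fin δ → Fin g) :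
    FreeAlgebra ℂ (Fin δ → Fin g) :=
  (List.ofFn fun i => FreeAlgebra.ι ℂ (μ i)).prod

theorem List.eq_of_flatten_eq_of_forall_length_eq {α : Type*} {n : ℕ} (hn : n ≠ 0) :
    ∀ {L₁ L₂ : List (List α)}, (∀ l ∈ L₁, l.length = n) → (∀ l ∈ L₂, l.length = n) →
      L₁.flatten = L₂.flatten → L₁ = L₂
  | [], [], _, _, _ => rfl
  | [], l :: _, _, h₂, h => by
    have := congrArg List.length (List.flatten_cons ▸ h).symm
    simp [h₂ l List.mem_cons_self, hn] at this
  | l :: _, [], h₁, _, h => by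
    have := congrArg List.length (List.flatten_cons ▸ h)
    simp [h₁ l List.mem_cons_self, hn] at this
  | l₁ :: L₁, l₂ :: L₂, h₁, h₂, h => by
    rw [List.flatten_cons, List.flatten_cons] at h
    obtain ⟨rfl, hL⟩ := List.append_inj h
      ((h₁ l₁ List.mem_cons_self).trans (h₂ l₂ List.mem_cons_self).symm)
    rw [List.eq_of_flatten_eq_of_forall_length_eq hn
      (fun l hl => h₁ l (List.mem_cons_of_mem _ hl))
      (fun l hl => h₂ l (List.mem_cons_of_mem _ hl)) hL]

namespace FreeMonoid

variable (α : Type*) (δ : ℕ)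

noncomputable def flattenBlocks : FreeMonoid (Fin δ → α) →* FreeMonoid α :=
  lift fun β => ofList (List.ofFn β)

variable {α δ}

theorem flattenBlocks_apply (w : FreeMonoid (Fin δ → α)) :
    flattenBlocks α δ w = ofList (w.toList.map List.ofFn).flatten := by
  rw [flattenBlocks, lift_apply, ofList_flatten, List.map_map]
  rfl

theorem flattenBlocks_injective (hδ : δ ≠ 0) : Function.Injective (flattenBlocks α δ) := by
  intro w₁ w₂ h
  rw [flattenBlocks_apply, flattenBlocks_apply] at h
  have hlen : ∀ w : FreeMonoid (Fin δ → α), ∀ l ∈ w.toList.map List.ofFn, l.length = δ := by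
    simp
  exact toList.injective <| (List.map_injective_iff.mpr List.ofFn_injective) <|
    List.eq_of_flatten_eq_of_forall_length_eq hδ (hlen w₁) (hlen w₂) (ofList.injective h)

end FreeMonoid

namespace FreeAlgebra

variable (R : Type*) [CommSemiring R] {X Y : Type*}

noncomputable def mapFreeMonoid (f : FreeMonoid X →* FreeMonoid Y) :
    FreeAlgebra R X →ₐ[R] FreeAlgebra R Y :=
  equivMonoidAlgebraFreeMonoid.symm.toAlgHom.comp <|
    (MonoidAlgebra.mapDomainAlgHom R R f).comp equivMonoidAlgebraFreeMonoid.toAlgHom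

variable {R}

theorem mapFreeMonoid_injective {f : FreeMonoid X →* FreeMonoid Y}
    (hf : Function.Injective f) : Function.Injective (mapFreeMonoid R f) :=
  equivMonoidAlgebraFreeMonoid.symm.injective.comp <|
    (MonoidAlgebra.mapDomain_injective hf).comp equivMonoidAlgebraFreeMonoid.injective

theorem mapFreeMonoid_ι (f : FreeMonoid X →* FreeMonoid Y) (x : X) :
    mapFreeMonoid R f (ι R x) = FreeMonoid.lift (ι R) (f (FreeMonoid.of x)) := by
  simp [mapFreeMonoid, equivMonoidAlgebraFreeMonoid]

end FreeAlgebra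

open FreeAlgebra FreeMonoid

theorem mapFreeMonoid_flattenBlocks_ι {g δ : ℕ} (β : Fin δ → Fin g) :
    mapFreeMonoid ℂ (flattenBlocks (Fin g) δ) (ι ℂ β) = ncWord β := by
  rw [mapFreeMonoid_ι, flattenBlocks, lift_eval_of, lift_ofList, List.map_ofFn]
  rfl

theorem mapFreeMonoid_flattenBlocks_zWord {g d δ : ℕ} (μ : Fin d → Fin δ → Fin g) :
    mapFreeMonoid ℂ (flattenBlocks (Fin g) δ) (zWord μ) = ncGWord μ := by
  simp only [zWord, ncGWord, map_list_prod, List.map_ofFn, Function.comp_def,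
    mapFreeMonoid_flattenBlocks_ι]

theorem stmt10_general (g d δ t : ℕ) (hδ : 1 ≤ δ)
    (P : (Fin d → (Fin δ → Fin g)) → ℂ) (A : Fin t → (Fin δ → Fin g) → ℂ) :
    ((∑ μ : Fin d → (Fin δ → Fin g), P μ • ncGWord μ)
        = ∑ s : Fin t, (∑ β : Fin δ → Fin g, A s β • ncWord β) ^ d)
      ↔ ((∑ μ : Fin d → (Fin δ → Fin g), P μ • zWord μ)
          = ∑ s : Fin t, (∑ β : Fin δ → Fin g, A s β • FreeAlgebra.ι ℂ β) ^ d) := by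
  set φ := mapFreeMonoid ℂ (flattenBlocks (Fin g) δ)
  have hφ : Function.Injective φ := mapFreeMonoid_injective (flattenBlocks_injective (by omega))
  have hP : φ (∑ μ : Fin d → (Fin δ → Fin g), P μ • zWord μ)
      = ∑ μ : Fin d → (Fin δ → Fin g), P μ • ncGWord μ := by
    simp only [φ, map_sum, map_smul, mapFreeMonoid_flattenBlocks_zWord]
  have hA : φ (∑ s : Fin t, (∑ β : Fin δ → Fin g, A s β • FreeAlgebra.ι ℂ β) ^ d)
      = ∑ s : Fin t, (∑ β : Fin δ → Fin g, A s β • ncWord β) ^ d := by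
    simp only [φ, map_sum, map_pow, map_smul, mapFreeMonoid_flattenBlocks_ι]
  rw [← hP, ← hA, hφ.eq_iff]

theorem stmt10 (g d δ t : ℕ) (hg : 1 ≤ g) (hd : 1 ≤ d) (hδ : 1 ≤ δ) (ht : 1 ≤ t)
    (P : (Fin d → (Fin δ → Fin g)) → ℂ) (A : Fin t → (Fin δ → Fin g) → ℂ) :
    ((∑ μ : Fin d → (Fin δ → Fin g), P μ • ncGWord μ)
        = ∑ s : Fin t, (∑ β : Fin δ → Fin g, A s β • ncWord β) ^ d)
      ↔ ((∑ μ : Fin d → (Fin δ → Fin g), P μ • zWord μ)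
          = ∑ s : Fin t, (∑ β : Fin δ → Fin g, A s β • FreeAlgebra.ι ℂ β) ^ d) :=
  stmt10_general g d δ t hδ P A
end
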